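/- arXiv:math/9912193 — 2 statements merged into one kernel-verified Lean document; each statement's English description precedes it below -/
import Mathlib

section
/- Let (Y, d) be a metric space, F : X → Set Y a lower semi-continuous multivalued map on a topological space X with each F(x) nonempty. For ε > 0 and x ∈ X, define U_x = {x' ∈ X | F(x) ⊆ O_ε(F(x'))}, where O_ε(B) denotes the open ε-neighborhood of B in Y. If F(x) is compact for each x, then U_x is open in X for every x ∈ X. -/
theorem Ux_isOpen {X Y : Type*} [TopologicalSpace X] [MetricSpace Y]
    (F : X → Set Y)
    (hF : ∀ U : Set Y, IsOpen U → IsOpen {x : X | (F x ∩ U).Nonempty})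
    (hne : ∀ x, (F x).Nonempty) (hcpt : ∀ x, IsCompact (F x))
    (ε : ℝ) (hε : 0 < ε) (x : X) :
    IsOpen {x' : X | F x ⊆ Metric.thickening ε (F x')} := by
  rw [isOpen_iff_mem_nhds]
  intro x' hx'
  choose b hb hd using fun (y : F x) => (Metric.mem_thickening_iff).1 (hx' y.2)
  set r : F x → ℝ := fun y => (ε - dist (y : Y) (b y)) / 2 with hrdef
  have hr : ∀ y, 0 < r y := fun y => by
    have := hd y; simp only [hrdef]; linarith
  have hcov : F x ⊆ ⋃ y : F x, Metric.ball (y : Y) (r y) := fun z hz =>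
    Set.mem_iUnion.2 ⟨⟨z, hz⟩, Metric.mem_ball_self (hr _)⟩
  obtain ⟨t, ht⟩ := (hcpt x).elim_finite_subcover
    (fun y : F x => Metric.ball (y : Y) (r y)) (fun _ => Metric.isOpen_ball) hcov
  refine mem_nhds_iff.2 ⟨⋂ y ∈ t, {x'' | (F x'' ∩ Metric.ball (b y) (r y)).Nonempty},
    ?_, ?_, ?_⟩
  · intro x'' hx'' z hz
    obtain ⟨y, hyt, hzy⟩ := Set.mem_iUnion₂.1 (ht hz)
    obtain ⟨c, hcF, hcb⟩ := Set.mem_iInter₂.1 hx'' y hyt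
    refine Metric.mem_thickening_iff.2 ⟨c, hcF, ?_⟩
    have h1 : dist z (y : Y) < r y := hzy
    have h2 : dist (b y) c < r y := by rw [dist_comm]; exact hcb
    have h3 : dist z c ≤ dist z (y : Y) + dist (y : Y) (b y) + dist (b y) c :=
      dist_triangle4 _ _ _ _
    have := hr y
    simp only [hrdef] at *
    linarith
  · exact isOpen_biInter_finset fun y _ => hF _ Metric.isOpen_ball
  · exact Set.mem_iInter₂.2 fun y _ => ⟨b y, hb y, Metric.mem_ball_self (hr y)⟩
end

section
/- Let 𝔅 be a finite subset of an index set A with |𝔅| = k+1, and let 𝒰 = {U_α} be a point-finite open cover of X of order ≤ n+1 with F_k, G_k^𝔅 defined as usual. Then closure(G_{k+1}^𝔅) ∩ F_k ⊆ ⋃ { G_{|𝔅'|}^{𝔅'} : 𝔅' ⊊ 𝔅 }. -/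
theorem closure_G_inter_Fk_subset {X : Type*} [TopologicalSpace X] {A : Type*}
    (U : A → Set X) (hopen : ∀ α, IsOpen (U α)) (hcov : ∀ x : X, ∃ α, x ∈ U α)
    (hpf : ∀ x : X, ({α | x ∈ U α}).Finite) (n : ℕ)
    (hord : ∀ x : X, ({α | x ∈ U α}).ncard ≤ n + 1)
    (k : ℕ) (𝔅 : Finset A) (hcard : 𝔅.card = k + 1) :
    closure ({x : X | ({α | x ∈ U α}).ncard ≤ k + 1} ∩ ⋂ α ∈ 𝔅, U α) ∩
        {x : X | ({α | x ∈ U α}).ncard ≤ k} ⊆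
      ⋃ 𝔅' ∈ {𝔅' : Finset A | 𝔅' ⊂ 𝔅},
        {x : X | ({α | x ∈ U α}).ncard ≤ 𝔅'.card} ∩ ⋂ α ∈ (𝔅' : Finset A), U α := by
  rintro x ⟨hxc, hxF⟩
  have hSfin : ({α | x ∈ U α}).Finite := hpf x
  -- every α with x ∈ U α lies in 𝔅
  have hSsub : {α | x ∈ U α} ⊆ ↑𝔅 := by
    intro β hβ
    obtain ⟨y, hyU, hyF, hyI⟩ :
        ∃ y, y ∈ U β ∧ ({α | y ∈ U α}).ncard ≤ k + 1 ∧ y ∈ ⋂ α ∈ 𝔅, U α := by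
      obtain ⟨y, hy1, hy2, hy3⟩ := mem_closure_iff.mp hxc (U β) (hopen β) hβ
      exact ⟨y, hy1, hy2, hy3⟩
    have hT : (↑𝔅 : Set A) ⊆ {α | y ∈ U α} := by
      intro α hα
      exact Set.mem_iInter₂.mp hyI α hα
    have heq : (↑𝔅 : Set A) = {α | y ∈ U α} := by
      apply Set.eq_of_subset_of_ncard_le hT _ (hpf y)
      simpa [hcard] using hyF
    have : β ∈ (↑𝔅 : Set A) := heq ▸ hyU
    exact this
  refine Set.mem_iUnion₂.mpr ⟨hSfin.toFinset, ?_, ?_, ?_⟩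
  · constructor
    · intro α hα
      exact hSsub (hSfin.mem_toFinset.mp hα)
    · intro hcon
      have : 𝔅.card ≤ hSfin.toFinset.card := Finset.card_le_card hcon
      have hle : hSfin.toFinset.card ≤ k := by
        rwa [← Set.ncard_eq_toFinset_card _ hSfin]
      omega
  · show ({α | x ∈ U α}).ncard ≤ hSfin.toFinset.card
    rw [Set.ncard_eq_toFinset_card _ hSfin]
  · exact Set.mem_iInter₂.mpr fun α hα => hSfin.mem_toFinset.mp hα
end
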